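/- Let E be a field and σ : E → E a ring automorphism with σ∘σ = id and σ ≠ id; let F = {x ∈ E : σ(x) = x} be its fixed field. Let n ≥ 1. Define an action of (E^×)ⁿ on the set (E^×)^{n−1} × F^×, with coordinates (k_1,…,k_{n−1},k_n), by (a·k)_i = a_i a_{i+1}^{-1} k_i for 1 ≤ i ≤ n−1 and (a·k)_n = a_n σ(a_n) k_n. Then two tuples k, k' lie in the same orbit if and only if k'_n k_n^{-1} ∈ {a σ(a) : a ∈ E^×}. In particular, the orbit space is in bijection with F^×/N_{E/F}(E^×), where N_{E/F}(a) = a σ(a) is the norm. -/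

import Mathlib

/-! The last coordinate transforms by the norm `a σ(a)` of the last torus entry, which gives one
direction. Conversely, once the last entry `c` is fixed by the norm condition, the ratios
`a_i / a_{i+1} = k'_i / k_i` determine the other entries by the telescoping product
`a_i = c ∏_{i ≤ j < n-1} k'_j / k_j`. -/

open Finset

section Telescoping

variable {G₀ : Type*} [CommGroupWithZero G₀]

theorem exists_mul_inv_succ_eq (r : ℕ → G₀) (m : ℕ) (hr : ∀ j < m, r j ≠ 0) {c : G₀}
    (hc : c ≠ 0) :
    ∃ a : ℕ → G₀, (∀ i, a i ≠ 0) ∧ (∀ i < m, a i * (a (i + 1))⁻¹ = r i) ∧ a m = c := by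
  let a : ℕ → G₀ := fun i => c * ∏ j ∈ Ico i m, r j
  have ha0 : ∀ i, a i ≠ 0 := fun i =>
    mul_ne_zero hc (prod_ne_zero_iff.2 fun j hj => hr j (mem_Ico.1 hj).2)
  refine ⟨a, ha0, fun i hi => ?_, by simp [a]⟩
  rw [mul_inv_eq_iff_eq_mul₀ (ha0 _)]
  simp only [a, prod_eq_prod_Ico_succ_bot hi, mul_left_comm c (r i)]

end Telescoping

section TorusAction

variable {E : Type*} [Field E] {n : ℕ}

def torusSmul (σ : E → E) (a k : Fin n → E) (i : Fin n) : E :=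
  if h : (i : ℕ) + 1 < n then a i * (a ⟨i + 1, h⟩)⁻¹ * k i else a i * σ (a i) * k i

theorem torusSmul_of_succ_lt (σ : E → E) (a k : Fin n → E) {i : Fin n} (h : (i : ℕ) + 1 < n) :
    torusSmul σ a k i = a i * (a ⟨i + 1, h⟩)⁻¹ * k i :=
  dif_pos h

theorem torusSmul_of_not_succ_lt (σ : E → E) (a k : Fin n → E) {i : Fin n}
    (h : ¬(i : ℕ) + 1 < n) : torusSmul σ a k i = a i * σ (a i) * k i :=
  dif_neg h

theorem mul_inv_eq_norm_of_eq_torusSmul (σ : E → E) {a k k' : Fin n → E} {i : Fin n}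
    (hi : ¬(i : ℕ) + 1 < n) (hk : k i ≠ 0) (h : ∀ j, k' j = torusSmul σ a k j) :
    k' i * (k i)⁻¹ = a i * σ (a i) := by
  rw [h, torusSmul_of_not_succ_lt σ a k hi, mul_inv_cancel_right₀ hk]

theorem exists_eq_torusSmul_of_mul_inv_eq_norm (σ : E → E) {k k' : Fin n → E} {i₀ : Fin n}
    (hi₀ : (i₀ : ℕ) + 1 = n) (hk : ∀ i, k i ≠ 0) (hk' : ∀ i, k' i ≠ 0) {c : E} (hc0 : c ≠ 0)
    (hc : k' i₀ * (k i₀)⁻¹ = c * σ c) :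
    ∃ a : Fin n → E, (∀ i, a i ≠ 0) ∧ ∀ i, k' i = torusSmul σ a k i := by
  let r : ℕ → E := fun j => if h : j < n then k' ⟨j, h⟩ / k ⟨j, h⟩ else 1
  have hr : ∀ i : Fin n, r i = k' i / k i := fun i => dif_pos i.isLt
  obtain ⟨a, ha0, ha, hlast⟩ := exists_mul_inv_succ_eq r i₀
    (fun j hj => by simp only [r, dif_pos (show j < n by omega)]; exact div_ne_zero (hk' _) (hk _))
    hc0
  refine ⟨fun i => a i, fun i => ha0 i, fun i => ?_⟩
  by_cases hi : (i : ℕ) + 1 < n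
  · rw [torusSmul_of_succ_lt σ _ k hi, ha i (by omega), hr, div_mul_cancel₀ _ (hk i)]
  · obtain rfl : i = i₀ := Fin.ext (by omega)
    rw [torusSmul_of_not_succ_lt σ _ k hi, ← mul_inv_eq_iff_eq_mul₀ (hk _), hc, hlast]

end TorusAction

/-- The torus action on Whittaker data for the quasi-split unitary group
`U_{2n}(F)` (`E/F` quadratic with involution `σ`): the coefficients satisfy
`k_0, …, k_{n-2} ∈ E^×` and `k_{n-1} ∈ F^×` (σ-fixed), the torus acts by
`(a·k)_i = a_i a_{i+1}⁻¹ k_i` for `i < n-1` and `(a·k)_{n-1} = a_{n-1} σ(a_{n-1}) k_{n-1}`.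
Two tuples lie in the same orbit iff the ratio of their last coordinates is a
norm `c·σ(c)`; so orbits are parameterized by `F^×/N_{E/F}(E^×)`. -/
theorem stmt_11 (E : Type*) [Field E] (σ : E →+* E)
    (n : ℕ) (hn : 0 < n)
    (k k' : Fin n → E)
    (hk0 : ∀ i, k i ≠ 0) (hk'0 : ∀ i, k' i ≠ 0) :
    (∃ a : Fin n → E, (∀ i, a i ≠ 0) ∧
      (∀ i : Fin n, k' i =
        if h : (i : ℕ) + 1 < n then a i * (a ⟨(i : ℕ) + 1, h⟩)⁻¹ * k i
        else a i * σ (a i) * k i)) ↔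
    (∃ c : E, c ≠ 0 ∧
      k' ⟨n - 1, by omega⟩ * (k ⟨n - 1, by omega⟩)⁻¹ = c * σ c) := by
  constructor
  · rintro ⟨a, ha0, ha⟩
    exact ⟨a _, ha0 _, mul_inv_eq_norm_of_eq_torusSmul σ (by simp only; omega) (hk0 _) ha⟩
  · rintro ⟨c, hc0, hc⟩
    exact exists_eq_torusSmul_of_mul_inv_eq_norm σ (by simp only; omega) hk0 hk'0 hc0 hc
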